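/- arXiv:0801.4835 — 2 statements merged into one kernel-verified Lean document; each statement's English description precedes it below -/
import Mathlib

section
/- For d ≥ 1, the d-pyrope Π_d := tconv({(1,1,…,1)} ∪ {−e_1, …, −e_d}) ⊆ ℝ^d, the tropical convex hull of the d+1 points (1,…,1), −e_1, …, −e_d, equals the ordinary convex hull conv([0,1]^d ∪ [−1,0]^d); in particular Π_d is a polytrope. -/
open Set

noncomputable section

/-- Extended (homogeneous) coordinates of a point of `TA^d ≅ ℝ^d`:
the 0-th coordinate is normalized to `0`. -/
def ext {d : ℕ} (x : Fin d → ℝ) : Fin (d + 1) → ℝ := Fin.cons 0 x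

/-- The tropical combination of `(l, x)` and `(m, y)`. -/
def tropComb {d : ℕ} (l m : ℝ) (x y : Fin d → ℝ) : Fin d → ℝ :=
  fun i => min (l + x i) (m + y i) - min l m

/-- A set is tropically convex if it is closed under tropical combinations. -/
def TropConvex {d : ℕ} (S : Set (Fin d → ℝ)) : Prop :=
  ∀ x ∈ S, ∀ y ∈ S, ∀ l m : ℝ, tropComb l m x y ∈ S

/-- The tropical convex hull: the intersection of all tropically convex supersets. -/
def tconv {d : ℕ} (V : Set (Fin d → ℝ)) : Set (Fin d → ℝ) :=
  ⋂₀ {S : Set (Fin d → ℝ) | TropConvex S ∧ V ⊆ S}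

/-- A tropical polytope is the tropical convex hull of a finite set. -/
def IsTropPolytope {d : ℕ} (P : Set (Fin d → ℝ)) : Prop :=
  ∃ V : Finset (Fin d → ℝ), P = tconv (V : Set (Fin d → ℝ))

/-- A polytrope is a tropical polytope which is also convex in the ordinary sense. -/
def IsPolytrope {d : ℕ} (P : Set (Fin d → ℝ)) : Prop :=
  IsTropPolytope P ∧ Convex ℝ P

/-!
Both sides equal the set `H` of all `x` with `x_i - x_j ≤ 1` for all `0 ≤ i, j ≤ d` (where
`x_0 = 0`). Such difference-constraint sets are convex both tropically and ordinarily, and `H`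
contains the generators of the pyrope and both cubes. Conversely, a point `x ∈ H` is the
tropical combination of `(1, …, 1)` with coefficient `0` and of the `-e_k` with coefficients
`x_k + 1`; and with `t = max(0, x_1, …, x_d) ∈ [0, 1]` it is the convex combination
`x = t • (x⁺ / t) + (1 - t) • (x⁻ / (1 - t))` of a point of `[0,1]^d` and a point of `[-1,0]^d`.
-/

section TropicalConvexity

variable {d : ℕ}

@[simp] lemma ext_zero (x : Fin d → ℝ) : ext x 0 = 0 := rfl

@[simp] lemma ext_succ (x : Fin d → ℝ) (k : Fin d) : ext x k.succ = x k := rfl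

lemma ext_tropComb (l m : ℝ) (x y : Fin d → ℝ) (i : Fin (d + 1)) :
    ext (tropComb l m x y) i = min (l + ext x i) (m + ext y i) - min l m := by
  cases i using Fin.cases <;> simp [tropComb]

lemma ext_smul_add_smul (a b : ℝ) (x y : Fin d → ℝ) (i : Fin (d + 1)) :
    ext (a • x + b • y) i = a * ext x i + b * ext y i := by
  cases i using Fin.cases <;> simp

lemma min_sub_min_le_of_sub_le {α : Type*} [AddCommGroup α] [LinearOrder α]
    [IsOrderedAddMonoid α] {a b a' b' c : α} (ha : a - a' ≤ c) (hb : b - b' ≤ c) :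
    min a b - min a' b' ≤ c := by
  rw [sub_le_iff_le_add, add_min]
  exact min_le_min (sub_le_iff_le_add.1 ha) (sub_le_iff_le_add.1 hb)

def diffConstraintSet (c : Fin (d + 1) → Fin (d + 1) → ℝ) : Set (Fin d → ℝ) :=
  {x | ∀ i j, ext x i - ext x j ≤ c i j}

lemma tropConvex_diffConstraintSet (c : Fin (d + 1) → Fin (d + 1) → ℝ) :
    TropConvex (diffConstraintSet c) := by
  intro x hx y hy l m i j
  simp only [ext_tropComb, sub_sub_sub_cancel_right]
  exact min_sub_min_le_of_sub_le (by simpa using hx i j) (by simpa using hy i j)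

lemma convex_diffConstraintSet (c : Fin (d + 1) → Fin (d + 1) → ℝ) :
    Convex ℝ (diffConstraintSet c) := by
  intro x hx y hy a b ha hb hab i j
  have hxa : a * (ext x i - ext x j) ≤ a * c i j := mul_le_mul_of_nonneg_left (hx i j) ha
  have hyb : b * (ext y i - ext y j) ≤ b * c i j := mul_le_mul_of_nonneg_left (hy i j) hb
  have hc : a * c i j + b * c i j = c i j := by rw [← add_mul, hab, one_mul]
  simp only [ext_smul_add_smul]
  linarith

lemma tconv_subset_of_tropConvex {V S : Set (Fin d → ℝ)} (hS : TropConvex S) (hVS : V ⊆ S) :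
    tconv V ⊆ S :=
  sInter_subset_of_mem ⟨hS, hVS⟩

lemma TropConvex.inf'_sub_inf'_mem {S : Set (Fin d → ℝ)} (hS : TropConvex S) {ι : Type*}
    {s : Finset ι} (hs : s.Nonempty) (l : ι → ℝ) {p : ι → Fin d → ℝ} (hp : ∀ j ∈ s, p j ∈ S) :
    (fun i => s.inf' hs (fun j => l j + p j i) - s.inf' hs l) ∈ S := by
  induction hs using Finset.Nonempty.cons_induction with
  | singleton a => simpa using hp a (Finset.mem_singleton_self a)
  | cons a s ha hs ih =>
    have hrest := ih fun j hj => hp j (Finset.mem_cons_of_mem hj)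
    convert hS _ (hp a (Finset.mem_cons_self a s)) _ hrest (l a) (s.inf' hs l) using 1
    funext i
    simp only [Finset.inf'_cons hs, tropComb, add_sub_cancel]

lemma inf'_sub_inf'_mem_tconv {V : Set (Fin d → ℝ)} {ι : Type*} {s : Finset ι}
    (hs : s.Nonempty) (l : ι → ℝ) {p : ι → Fin d → ℝ} (hp : ∀ j ∈ s, p j ∈ V) :
    (fun i => s.inf' hs (fun j => l j + p j i) - s.inf' hs l) ∈ tconv V :=
  mem_sInter.2 fun _ ⟨hS, hVS⟩ => hS.inf'_sub_inf'_mem hs l fun j hj => hVS (hp j hj)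

end TropicalConvexity

section Pyrope

variable {d : ℕ}

def pyropeVertex (d : ℕ) : Fin (d + 1) → Fin d → ℝ :=
  Fin.cons (fun _ => 1) (fun i k => if k = i then -1 else 0)

lemma pyropeVertex_mem_cubes (j : Fin (d + 1)) :
    pyropeVertex d j ∈ Icc (0 : Fin d → ℝ) 1 ∪ Icc (-1) 0 := by
  cases j using Fin.cases with
  | zero => exact Or.inl ⟨fun _ => zero_le_one, fun _ => le_rfl⟩
  | succ k =>
    refine Or.inr ⟨fun i => ?_, fun i => ?_⟩ <;> by_cases h : i = k <;> simp [pyropeVertex, h]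

lemma mem_diffConstraintSet_one_of_mem_Icc {a : ℝ} (ha₀ : a ≤ 0) (ha₁ : 0 ≤ a + 1)
    {x : Fin d → ℝ} (hx : ∀ k, x k ∈ Icc a (a + 1)) :
    x ∈ diffConstraintSet (fun _ _ => 1) := by
  have h : ∀ i, ext x i ∈ Icc a (a + 1) := Fin.forall_fin_succ.2 ⟨⟨ha₀, ha₁⟩, hx⟩
  intro i j
  linarith [(h i).2, (h j).1]

lemma cubes_subset_diffConstraintSet :
    Icc (0 : Fin d → ℝ) 1 ∪ Icc (-1) 0 ⊆ diffConstraintSet (fun _ _ => 1) := by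
  rintro x (⟨hl, hu⟩ | ⟨hl, hu⟩)
  · exact mem_diffConstraintSet_one_of_mem_Icc (a := 0) le_rfl (by norm_num)
      fun k => ⟨hl k, by simpa using hu k⟩
  · exact mem_diffConstraintSet_one_of_mem_Icc (a := -1) (by norm_num) (by norm_num)
      fun k => ⟨by simpa using hl k, by simpa using hu k⟩

lemma diffConstraintSet_one_subset_tconv :
    diffConstraintSet (fun _ _ => 1) ⊆ tconv (range (pyropeVertex d)) := by
  intro x hx
  replace hx : ∀ i j, ext x i - ext x j ≤ 1 := hx
  have hl : Finset.univ.inf' Finset.univ_nonempty (ext (x + 1)) = 0 := by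
    refine le_antisymm (Finset.inf'_le _ (Finset.mem_univ 0)) (Finset.le_inf' _ _ ?_)
    simp only [Finset.mem_univ, forall_const, Fin.forall_fin_succ, ext_zero, ext_succ,
      Pi.add_apply, Pi.one_apply, le_refl, true_and]
    intro k
    linarith [hx 0 k.succ, ext_zero x, ext_succ x k]
  have hcoord (i : Fin d) :
      Finset.univ.inf' Finset.univ_nonempty (fun j => ext (x + 1) j + pyropeVertex d j i)
        = x i := by
    refine le_antisymm ((Finset.inf'_le _ (Finset.mem_univ i.succ)).trans (by simp [pyropeVertex]))
      (Finset.le_inf' _ _ ?_)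
    simp only [Finset.mem_univ, forall_const, Fin.forall_fin_succ]
    refine ⟨by simpa [pyropeVertex] using hx i.succ 0, fun k => ?_⟩
    by_cases h : k = i
    · simp [pyropeVertex, h]
    · simpa [pyropeVertex, Ne.symm h, add_comm] using hx i.succ k.succ
  convert inf'_sub_inf'_mem_tconv Finset.univ_nonempty (ext (x + 1))
    fun j _ => mem_range_self (f := pyropeVertex d) j
  simp [hl, hcoord]

lemma tconv_range_pyropeVertex :
    tconv (range (pyropeVertex d)) = diffConstraintSet (fun _ _ => 1) :=
  (tconv_subset_of_tropConvex (tropConvex_diffConstraintSet _) (range_subset_iff.2 fun j =>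
    cubes_subset_diffConstraintSet (pyropeVertex_mem_cubes j))).antisymm
    diffConstraintSet_one_subset_tconv

/- Division by zero is harmless: `t = 0` forces `max (x i) 0 = 0` and `t = 1` forces
`min (x i) 0 = 0`. -/
lemma mem_convexHull_cubes_of_mem_Icc {ι : Type*} {x : ι → ℝ} {t : ℝ} (ht₀ : 0 ≤ t)
    (ht₁ : t ≤ 1) (hx : ∀ i, x i ∈ Icc (t - 1) t) :
    x ∈ convexHull ℝ (Icc (0 : ι → ℝ) 1 ∪ Icc (-1) 0) := by
  set u : ι → ℝ := fun i => max (x i) 0 / t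
  set v : ι → ℝ := fun i => min (x i) 0 / (1 - t)
  have hu : u ∈ Icc 0 1 :=
    ⟨fun i => div_nonneg (le_max_right _ _) ht₀,
      fun i => div_le_one_of_le₀ (max_le (hx i).2 ht₀) ht₀⟩
  have hv : v ∈ Icc (-1) 0 := by
    refine ⟨fun i => neg_le.2 ?_, fun i => div_nonpos_of_nonpos_of_nonneg (min_le_right _ _)
      (sub_nonneg.2 ht₁)⟩
    rw [← neg_div]
    exact div_le_one_of_le₀ (by linarith [le_min (hx i).1 (by linarith : t - 1 ≤ 0)])
      (sub_nonneg.2 ht₁)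
  have hxuv : x = t • u + (1 - t) • v := by
    funext i
    have hmax : t = 0 → max (x i) 0 = 0 := fun h => max_eq_right (h ▸ (hx i).2)
    have hmin : 1 - t = 0 → min (x i) 0 = 0 := fun h => min_eq_right (by linarith [(hx i).1])
    simp only [Pi.add_apply, Pi.smul_apply, smul_eq_mul, u, v, mul_div_cancel_of_imp' hmax,
      mul_div_cancel_of_imp' hmin]
    linarith [min_add_max (x i) 0]
  have hcubes := subset_convexHull ℝ (Icc (0 : ι → ℝ) 1 ∪ Icc (-1) 0)
  rw [hxuv]
  exact convex_convexHull ℝ _ (hcubes (Or.inl hu)) (hcubes (Or.inr hv)) ht₀ (sub_nonneg.2 ht₁)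
    (by ring)

lemma diffConstraintSet_one_subset_convexHull :
    diffConstraintSet (fun _ _ => 1) ⊆ convexHull ℝ (Icc (0 : Fin d → ℝ) 1 ∪ Icc (-1) 0) := by
  intro x hx
  replace hx : ∀ i j, ext x i - ext x j ≤ 1 := hx
  obtain ⟨j, -, hj⟩ := Finset.exists_mem_eq_sup' Finset.univ_nonempty (ext x)
  have hle (i : Fin (d + 1)) : ext x i ≤ ext x j :=
    hj ▸ Finset.le_sup' (ext x) (Finset.mem_univ i)
  refine mem_convexHull_cubes_of_mem_Icc (hle 0) (by simpa using hx j 0)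
    fun k => ⟨?_, hle k.succ⟩
  linarith [hx j k.succ, ext_succ x k]

lemma convexHull_cubes_eq_diffConstraintSet :
    convexHull ℝ (Icc (0 : Fin d → ℝ) 1 ∪ Icc (-1) 0) = diffConstraintSet (fun _ _ => 1) :=
  (convexHull_min cubes_subset_diffConstraintSet (convex_diffConstraintSet _)).antisymm
    diffConstraintSet_one_subset_convexHull

end Pyrope

theorem pyrope_eq_conv_cubes_general {d : ℕ} :
    tconv (Set.range
        (Fin.cons (fun _ => 1) (fun i k => if k = i then -1 else 0) :
          Fin (d + 1) → Fin d → ℝ)) =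
        convexHull ℝ (Set.Icc (0 : Fin d → ℝ) 1 ∪ Set.Icc (-1) 0) ∧
      IsPolytrope (tconv (Set.range
        (Fin.cons (fun _ => 1) (fun i k => if k = i then -1 else 0) :
          Fin (d + 1) → Fin d → ℝ))) := by
  change tconv (range (pyropeVertex d)) = _ ∧ IsPolytrope (tconv (range (pyropeVertex d)))
  have hpyrope :
      tconv (range (pyropeVertex d)) = convexHull ℝ (Icc (0 : Fin d → ℝ) 1 ∪ Icc (-1) 0) := by
    rw [tconv_range_pyropeVertex, convexHull_cubes_eq_diffConstraintSet]
  exact ⟨hpyrope, ⟨Finset.univ.image (pyropeVertex d), by simp⟩, hpyrope ▸ convex_convexHull ℝ _⟩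

/-- The `d`-pyrope `Π_d = tconv{(1,…,1), -e_1, …, -e_d}` equals the ordinary
convex hull `conv([0,1]^d ∪ [-1,0]^d)`; in particular it is a polytrope. -/
theorem pyrope_eq_conv_cubes {d : ℕ} (hd : 1 ≤ d) :
    tconv (Set.range
        (Fin.cons (fun _ => 1) (fun i k => if k = i then -1 else 0) :
          Fin (d + 1) → Fin d → ℝ)) =
        convexHull ℝ (Set.Icc (0 : Fin d → ℝ) 1 ∪ Set.Icc (-1) 0) ∧
      IsPolytrope (tconv (Set.range
        (Fin.cons (fun _ => 1) (fun i k => if k = i then -1 else 0) :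
          Fin (d + 1) → Fin d → ℝ))) :=
  pyrope_eq_conv_cubes_general
end
end

section
/- Let P = tconv{v_1, …, v_n} ⊆ ℝ^d be a tropical polytope of affine dimension d, let k ∈ {0, …, d}, and let c_k be the k-th corner of (v_1, …, v_n). If H is a closed tropical halfspace (with some apex a and some type I) satisfying P ⊆ H ⊆ c_k + S̄_k, then H = c_k + S̄_k. (Note that c_k + S̄_k is itself the closed tropical halfspace with apex c_k and type {k}.) -/
open Set

noncomputable section

/-- The `k`-th corner of the points `v_1, …, v_n`:
`(c_k)_j = min_i (v_{i,j} - v_{i,k}) - min_i (v_{i,0} - v_{i,k})` for `j = 1, …, d`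
(homogeneous coordinates, `v_{i,0} := 0`). -/
def corner {d n : ℕ} (v : Fin n → Fin d → ℝ) (k : Fin (d + 1)) : Fin d → ℝ :=
  fun j => (⨅ i, (ext (v i) j.succ - ext (v i) k)) - (⨅ i, (ext (v i) 0 - ext (v i) k))

/-- The `k`-th closed sector based at `a`:
`a + S̄_k = {x : x_k - a_k ≤ x_j - a_j for all j}` (homogeneous coordinates). -/
def sector {d : ℕ} (a : Fin d → ℝ) (k : Fin (d + 1)) : Set (Fin d → ℝ) :=
  {x | ∀ j : Fin (d + 1), ext x k - ext a k ≤ ext x j - ext a j}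

/-- The closed tropical halfspace with apex `a` (with `a_0 := 0`) and type `I`:
the set of `x` with `min_{i ∈ I} (x_i - a_i) ≤ min_{j ∉ I} (x_j - a_j)`. -/
def tropHalfspace {d : ℕ} (a : Fin d → ℝ) (I : Set (Fin (d + 1))) : Set (Fin d → ℝ) :=
  {x | ∀ j ∉ I, ∃ i ∈ I, ext x i - ext a i ≤ ext x j - ext a j}

/-!
Every condition defining a halfspace or a sector only involves differences of homogeneous
coordinates. A halfspace contained in the sector `c_k + S̄_k` must have type `{k}`: for any other
index `i` of its type, moving far away from the apex in every homogeneous coordinate except `i`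
stays inside the halfspace but leaves the sector. So `H = a + S̄_k`, and `c_k + S̄_k` is the
smallest `k`-th sector containing the `v_i`, which forces `c_k + S̄_k ⊆ H`.
-/

theorem subset_tconv {d : ℕ} (V : Set (Fin d → ℝ)) : V ⊆ tconv V :=
  fun _ hx => mem_sInter.2 fun _ hS => hS.2 hx

@[simp]
theorem ext_apply_zero {d : ℕ} (x : Fin d → ℝ) : ext x 0 = 0 := rfl

@[simp]
theorem ext_apply_succ {d : ℕ} (x : Fin d → ℝ) (j : Fin d) : ext x j.succ = x j := rfl

theorem exists_ext_eq_sub {d : ℕ} (Y : Fin (d + 1) → ℝ) :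
    ∃ x : Fin d → ℝ, ∀ j, ext x j = Y j - Y 0 :=
  ⟨fun j => Y j.succ - Y 0, fun j => Fin.cases (by simp) (fun _ => by simp) j⟩

section Sector

variable {d : ℕ}

theorem mem_sector_iff {x a : Fin d → ℝ} {k : Fin (d + 1)} :
    x ∈ sector a k ↔ ∀ j, ext a j - ext a k ≤ ext x j - ext x k :=
  forall_congr' fun _ => by constructor <;> intro h <;> linarith

theorem sector_subset_sector {a b : Fin d → ℝ} {k : Fin (d + 1)}
    (h : ∀ j, ext a j - ext a k ≤ ext b j - ext b k) : sector b k ⊆ sector a k :=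
  fun _ hx => mem_sector_iff.2 fun j => (h j).trans (mem_sector_iff.1 hx j)

theorem ext_corner_sub_ext_corner {n : ℕ} (v : Fin n → Fin d → ℝ) (k j : Fin (d + 1)) :
    ext (corner v k) j - ext (corner v k) k = ⨅ i, (ext (v i) j - ext (v i) k) := by
  have ext_corner : ∀ l, ext (corner v k) l =
      (⨅ i, (ext (v i) l - ext (v i) k)) - ⨅ i, (ext (v i) 0 - ext (v i) k) :=
    fun l => Fin.cases (by simp) (fun _ => by simp [corner]) l
  simp only [ext_corner, sub_self, Real.iInf_const_zero]
  ring

theorem sector_corner_subset {n : ℕ} [Nonempty (Fin n)] {v : Fin n → Fin d → ℝ}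
    {a : Fin d → ℝ} {k : Fin (d + 1)} (hv : ∀ i, v i ∈ sector a k) :
    sector (corner v k) k ⊆ sector a k :=
  sector_subset_sector fun j => by
    rw [ext_corner_sub_ext_corner]
    exact le_ciInf fun i => mem_sector_iff.1 (hv i) j

end Sector

section Halfspace

variable {d : ℕ}

theorem tropHalfspace_singleton (a : Fin d → ℝ) (k : Fin (d + 1)) :
    tropHalfspace a {k} = sector a k := by
  ext x
  refine ⟨fun h j => ?_, fun h j _ => ⟨k, rfl, h j⟩⟩
  by_cases hjk : j = k
  · rw [hjk]
  · obtain ⟨i, rfl, hi⟩ := h j hjk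
    exact hi

theorem eq_of_mem_of_tropHalfspace_subset_sector {a b : Fin d → ℝ} {I : Set (Fin (d + 1))}
    {i k : Fin (d + 1)} (hi : i ∈ I) (h : tropHalfspace a I ⊆ sector b k) : i = k := by
  by_contra hik
  obtain ⟨t, ht0, ht⟩ : ∃ t : ℝ, 0 ≤ t ∧ ext a i - ext b i - ext a k + ext b k < t :=
    ⟨_, le_max_left 0 _, lt_max_of_lt_right (lt_add_one _)⟩
  obtain ⟨x, hx⟩ := exists_ext_eq_sub fun j => if j = i then ext a i else ext a j + t
  have hxH : x ∈ tropHalfspace a I := by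
    refine fun j hj => ⟨i, hi, ?_⟩
    have hji : j ≠ i := fun hji => hj (hji ▸ hi)
    simp only [hx, ↓reduceIte, if_neg hji]
    linarith
  have hxS := h hxH i
  simp only [hx, ↓reduceIte, if_neg (Ne.symm hik)] at hxS
  linarith

end Halfspace

theorem cornered_halfspace_is_minimal_general {d n : ℕ} (hn : 0 < n)
    (v : Fin n → Fin d → ℝ) (k : Fin (d + 1))
    (a : Fin d → ℝ) (I : Set (Fin (d + 1))) (hI : I.Nonempty)
    (hPH : tconv (Set.range v) ⊆ tropHalfspace a I)
    (hHS : tropHalfspace a I ⊆ sector (corner v k) k) :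
    tropHalfspace a I = sector (corner v k) k := by
  have : Nonempty (Fin n) := Fin.pos_iff_nonempty.mp hn
  obtain rfl : I = {k} :=
    hI.subset_singleton_iff.mp fun _ hi => eq_of_mem_of_tropHalfspace_subset_sector hi hHS
  rw [tropHalfspace_singleton] at hPH hHS ⊢
  have hv : ∀ i, v i ∈ sector a k := fun i => hPH (subset_tconv _ (mem_range_self i))
  exact hHS.antisymm (sector_corner_subset hv)

/-- For a tropical polytope `P = tconv{v_1,…,v_n}` of affine dimension `d`,
any closed tropical halfspace `H` squeezed between `P` and the cornered halfspace
`c_k + S̄_k` equals `c_k + S̄_k`. -/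
theorem cornered_halfspace_is_minimal {d n : ℕ} (hn : 0 < n)
    (v : Fin n → Fin d → ℝ) (k : Fin (d + 1))
    (hdim : affineSpan ℝ (tconv (Set.range v)) = ⊤)
    (a : Fin d → ℝ) (I : Set (Fin (d + 1))) (hI : I.Nonempty) (hIu : I ≠ Set.univ)
    (hPH : tconv (Set.range v) ⊆ tropHalfspace a I)
    (hHS : tropHalfspace a I ⊆ sector (corner v k) k) :
    tropHalfspace a I = sector (corner v k) k :=
  cornered_halfspace_is_minimal_general hn v k a I hI hPH hHS
end
end
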